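/- Let p be a prime and let t = a₁u + a₂u² + ⋯ ∈ ℤ_(p)[[u]] with a₁ a unit in ℤ_(p). Then the formal Laurent series (θt)(u)/t(u) − (1/p)·(θ(t∘u^p))(u)/t(u^p), where θ = u·d/du, is actually a formal power series all of whose coefficients lie in ℤ_(p). -/

import Mathlib

open PowerSeries

/-!
Write `t = u·v`; then `v(0) = a₁` is a unit of `ℤ_(p)`, so `v⁻¹`, and with it
`f := θt/t = t'/v`, has coefficients in `ℤ_(p)`. Since `θ(g∘u^p) = p·(θg)∘u^p`, the Laurent
series in question is `f − f∘u^p`.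
-/

/-- `x ∈ ℤ_(p)`: `x` is a rational number whose denominator is prime to `p`. -/
def PInt (p : ℕ) (x : ℚ) : Prop := ∃ a b : ℤ, ¬ (p : ℤ) ∣ b ∧ (b : ℚ) * x = (a : ℚ)

/-- Composition of a power series with `u ↦ u^p`. -/
noncomputable def substPow (p : ℕ) (t : PowerSeries ℚ) : PowerSeries ℚ :=
  PowerSeries.mk fun n => if p ∣ n then coeff (R := ℚ) (n / p) t else 0

/-- The operator `θ = u·d/du` on power series. -/
noncomputable def theta (f : PowerSeries ℚ) : PowerSeries ℚ :=
  PowerSeries.mk fun n => (n : ℚ) * coeff (R := ℚ) n f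

theorem pInt_iff_not_dvd_den {p : ℕ} {x : ℚ} : PInt p x ↔ ¬ p ∣ x.den := by
  constructor
  · rintro ⟨a, b, hpb, hba⟩ hpx
    have hb : (b : ℚ) ≠ 0 := fun hb => hpb (by simp [Int.cast_eq_zero.mp hb])
    have hx : x = Rat.divInt a b := by rw [Rat.divInt_eq_div, ← hba]; field_simp
    exact hpb ((Int.natCast_dvd_natCast.mpr hpx).trans (hx ▸ Rat.den_dvd a b))
  · intro hpx
    exact ⟨x.num, x.den, fun h => hpx (Int.natCast_dvd_natCast.mp h), Rat.den_mul_eq_num x⟩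

/-- `ℤ_(p)` as a subring of `ℚ`. -/
def ratIntegersAt {p : ℕ} (hp : p.Prime) : Subring ℚ where
  carrier := {x | ¬ p ∣ x.den}
  one_mem' := by simpa using hp.ne_one
  zero_mem' := by simpa using hp.ne_one
  add_mem' {x y} hx hy hxy :=
    hp.dvd_mul.not.mpr (not_or.mpr ⟨hx, hy⟩) (hxy.trans (Rat.add_den_dvd x y))
  mul_mem' {x y} hx hy hxy :=
    hp.dvd_mul.not.mpr (not_or.mpr ⟨hx, hy⟩) (hxy.trans (Rat.mul_den_dvd x y))
  neg_mem' {x} hx := by simpa using hx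

theorem mem_ratIntegersAt_iff {p : ℕ} (hp : p.Prime) {x : ℚ} : x ∈ ratIntegersAt hp ↔ PInt p x :=
  pInt_iff_not_dvd_den.symm

namespace PowerSeries

variable {R : Type*} [CommRing R] {S : Subring R}

theorem mem_range_map_subtype_iff {f : R⟦X⟧} :
    f ∈ (map S.subtype).range ↔ ∀ n, coeff n f ∈ S := by
  refine ⟨?_, fun h => ⟨mk fun n => ⟨coeff n f, h n⟩, by ext; simp⟩⟩
  rintro ⟨g, rfl⟩ n
  simp [coeff_map]

theorem derivative_mem_range_map_subtype {f : R⟦X⟧} (hf : f ∈ (map S.subtype).range) :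
    d⁄dX R f ∈ (map S.subtype).range := by
  rw [mem_range_map_subtype_iff] at hf ⊢
  intro n
  rw [coeff_derivative]
  exact mul_mem (hf _) (by exact_mod_cast natCast_mem S (n + 1))

theorem expand_mem_range_map_subtype {f : R⟦X⟧} (p : ℕ) (hp : p ≠ 0)
    (hf : f ∈ (map S.subtype).range) : expand p hp f ∈ (map S.subtype).range := by
  obtain ⟨g, rfl⟩ := hf
  exact ⟨expand p hp g, map_expand ..⟩

theorem inv_mem_range_map_subtype {K : Type*} [Field K] {S : Subring K} {f : K⟦X⟧}
    (hf : f ∈ (map S.subtype).range) (hf0 : (constantCoeff f)⁻¹ ∈ S) :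
    f⁻¹ ∈ (map S.subtype).range := by
  obtain ⟨g, rfl⟩ := hf
  by_cases hc : constantCoeff (map S.subtype g) = 0
  · rw [inv_eq_zero.mpr hc]
    exact zero_mem _
  have hg : IsUnit g := by
    rw [isUnit_iff_constantCoeff]
    refine IsUnit.of_mul_eq_one ⟨_, hf0⟩ (Subtype.ext ?_)
    simpa [← coeff_zero_eq_constantCoeff, coeff_map] using mul_inv_cancel₀ hc
  obtain ⟨u, rfl⟩ := hg
  refine ⟨↑u⁻¹, ((eq_inv_iff_mul_eq_one hc).mpr ?_)⟩
  rw [← map_mul, Units.inv_mul, map_one]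

theorem exists_X_mul_derivative_eq_mul {K : Type*} [Field K] {S : Subring K}
    {t : K⟦X⟧} (ht : t ∈ (map S.subtype).range) (ht0 : constantCoeff t = 0)
    (ht1 : ∃ y ∈ S, coeff 1 t * y = 1) :
    ∃ f ∈ (map S.subtype).range, X * d⁄dX K t = f * t := by
  obtain ⟨y, hyS, hy⟩ := ht1
  obtain ⟨v, rfl⟩ := X_dvd_iff.mpr ht0
  have hv1 : constantCoeff v = coeff 1 (X * v) := by
    rw [coeff_succ_X_mul, coeff_zero_eq_constantCoeff]
  have hv : v ∈ (map S.subtype).range := mem_range_map_subtype_iff.mpr fun n => by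
    rw [← coeff_succ_X_mul]
    exact mem_range_map_subtype_iff.mp ht (n + 1)
  have hv0 : constantCoeff v ≠ 0 := hv1 ▸ left_ne_zero_of_mul_eq_one hy
  refine ⟨d⁄dX K (X * v) * v⁻¹,
    mul_mem (derivative_mem_range_map_subtype ht) (inv_mem_range_map_subtype hv ?_), ?_⟩
  · rwa [hv1, inv_eq_of_mul_eq_one_right hy]
  · calc X * d⁄dX K (X * v) = d⁄dX K (X * v) * X * (v⁻¹ * v) := by
          rw [PowerSeries.inv_mul_cancel _ hv0]; ring
      _ = d⁄dX K (X * v) * v⁻¹ * (X * v) := by ring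

end PowerSeries

theorem substPow_eq_expand {p : ℕ} (hp : p ≠ 0) (f : ℚ⟦X⟧) : substPow p f = expand p hp f := by
  ext n
  simp [substPow, coeff_expand]

theorem theta_eq_X_mul_derivative (f : ℚ⟦X⟧) : theta f = X * d⁄dX ℚ f := by
  ext (_ | n)
  · simp [theta]
  · simp [theta, coeff_succ_X_mul, coeff_derivative, mul_comm]

theorem theta_substPow {p : ℕ} (f : ℚ⟦X⟧) :
    theta (substPow p f) = C (p : ℚ) * substPow p (theta f) := by
  ext n
  rw [coeff_C_mul]
  simp only [theta, substPow, coeff_mk]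
  split_ifs with h
  · obtain ⟨m, rfl⟩ := h
    rcases p.eq_zero_or_pos with rfl | hp
    · simp
    rw [Nat.mul_div_cancel_left _ hp]
    push_cast
    ring
  · ring

/-- for `t = a₁u + a₂u² + ⋯ ∈ ℤ_(p)[[u]]` with `a₁` a unit in `ℤ_(p)`,
the Laurent series `θt/t − (1/p)·θ(t∘u^p)/(t∘u^p)` is a power series `h` with all
coefficients in `ℤ_(p)`.  (The quotient identity is stated multiplied through by
`p·t·t(u^p)`, which are nonzerodivisors.) -/
theorem log_derivative_integrality (p : ℕ) (hp : p.Prime) (t : PowerSeries ℚ)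
    (ht : ∀ n : ℕ, PInt p (coeff (R := ℚ) n t)) (ht0 : constantCoeff (R := ℚ) t = 0)
    (ha1 : PInt p (coeff (R := ℚ) 1 t) ∧ ∃ y : ℚ, PInt p y ∧ coeff (R := ℚ) 1 t * y = 1) :
    ∃ h : PowerSeries ℚ, (∀ n : ℕ, PInt p (coeff (R := ℚ) n h)) ∧
      (C (R := ℚ) p) * theta t * substPow p t - theta (substPow p t) * t =
        (C (R := ℚ) p) * h * (t * substPow p t) := by
  let S := ratIntegersAt hp
  obtain ⟨-, y, hy, hy1⟩ := ha1
  have htS : t ∈ (map S.subtype).range :=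
    mem_range_map_subtype_iff.mpr fun n => (mem_ratIntegersAt_iff hp).mpr (ht n)
  obtain ⟨f, hfS, hf⟩ :=
    exists_X_mul_derivative_eq_mul htS ht0 ⟨y, (mem_ratIntegersAt_iff hp).mpr hy, hy1⟩
  have hE := substPow_eq_expand hp.ne_zero
  have hfE : f - substPow p f ∈ (map S.subtype).range :=
    sub_mem hfS (hE f ▸ expand_mem_range_map_subtype p hp.ne_zero hfS)
  refine ⟨f - substPow p f,
    fun n => (mem_ratIntegersAt_iff hp).mp (mem_range_map_subtype_iff.mp hfE n), ?_⟩
  rw [theta_substPow, theta_eq_X_mul_derivative, hf, hE, hE, hE, map_mul]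
  ring
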